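/- For every F ∈ 𝓕 and n ≥ 0, the quotient coker(ε_F : Δ^{n+1}F ⊗ P̄^{⊗(n+1)} → F), where ε_F is the counit of the adjunction between − ⊗ P̄^{⊗(n+1)} and Δ^{n+1}, is polynomial of degree at most n, and every morphism from F to a functor that is polynomial of degree at most n factors uniquely through this quotient. Consequently the inclusion of the full subcategory of polynomial functors of degree at most n into 𝓕 admits a left adjoint q_n, given by q_nF = coker(ε_F). -/

import Mathlib

open CategoryTheory CategoryTheory.Limits TensorProduct MonoidalCategory

noncomputable section

variable (p : ℕ) [Fact p.Prime]

/-- `k = F_p`. -/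
abbrev Kk (p : ℕ) : Type := ZMod p

/-- The category `𝓕` of functors from finite-dimensional `F_p`-vector spaces
to `F_p`-vector spaces. -/
abbrev FF (p : ℕ) [Fact p.Prime] := FGModuleCat.{0} (Kk p) ⥤ ModuleCat.{0} (Kk p)

/-- The functor `V ↦ V ⊕ k` on finite-dimensional vector spaces. -/
def addOne : FGModuleCat.{0} (Kk p) ⥤ FGModuleCat.{0} (Kk p) where
  obj V := FGModuleCat.of (Kk p) (V × Kk p)
  map f := FGModuleCat.ofHom (LinearMap.prodMap f.hom.hom (LinearMap.id : Kk p →ₗ[Kk p] Kk p))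
  map_id := by intros; ext x <;> rfl
  map_comp := by intros; ext x <;> rfl

/-- The natural inclusion `i_V : V → V ⊕ k`. -/
def inclOne : 𝟭 (FGModuleCat.{0} (Kk p)) ⟶ addOne p where
  app V := FGModuleCat.ofHom (LinearMap.inl (Kk p) V (Kk p) : V →ₗ[Kk p] V × Kk p)
  naturality := by intros; ext x; rfl

/-- The natural projection `V ⊕ k → V`. -/
def projOne : addOne p ⟶ 𝟭 (FGModuleCat.{0} (Kk p)) where
  app V := FGModuleCat.ofHom (LinearMap.fst (Kk p) V (Kk p) : V × Kk p →ₗ[Kk p] V)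
  naturality := by intros; ext x; rfl

/-- Precomposition with `V ↦ V ⊕ k`, i.e. `F ↦ (V ↦ F(V ⊕ k))`. -/
def preAdd : FF p ⥤ FF p := (Functor.whiskeringLeft _ _ _).obj (addOne p)

/-- The natural transformation `F ⟶ F(− ⊕ k)` induced by the inclusions `i_V`. -/
def unitPre : 𝟭 (FF p) ⟶ preAdd p where
  app F := Functor.whiskerRight (inclOne p) F
  naturality := by
    intro F G α
    ext V : 2
    exact (α.naturality ((inclOne p).app V)).symm

/-- The difference functor `Δ : 𝓕 → 𝓕`, the cokernel of `F ⟶ F(− ⊕ k)`. -/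
def Delta : FF p ⥤ FF p := cokernel (unitPre p)

/-- Iterates `Δ^n` of the difference functor. -/
def deltaIter : ℕ → (FF p ⥤ FF p)
  | 0 => 𝟭 (FF p)
  | n + 1 => deltaIter n ⋙ Delta p

/-- `F` is polynomial of degree at most `n` if `Δ^{n+1} F = 0`. -/
def IsPolyLE (n : ℕ) (F : FF p) : Prop := IsZero ((deltaIter p (n + 1)).obj F)



/-- The forgetful functor, i.e. the identity functor `Id ∈ 𝓕`. -/
def idFun : FF p := forget₂ (FGModuleCat.{0} (Kk p)) (ModuleCat.{0} (Kk p))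

/-- The constant functor with value `k`, i.e. the unit of `𝓕`. -/
def constK : FF p := (Functor.const _).obj (ModuleCat.of (Kk p) (Kk p))

/-- The functor `P ∈ 𝓕`, `V ↦ k[V]`. -/
def Pfun : FF p where
  obj V := ModuleCat.of (Kk p) ((V : Type) →₀ Kk p)
  map f := ModuleCat.ofHom (Finsupp.lmapDomain (Kk p) (Kk p) f)
  map_id V := by
    ext : 1
    apply Finsupp.lhom_ext
    intro a b
    simp [Finsupp.mapDomain_single]
  map_comp f g := by
    ext : 1
    apply Finsupp.lhom_ext
    intro a b
    simp [Finsupp.mapDomain_single]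

/-- The augmentation `P ⟶ k`, `[v] ↦ 1`. -/
def augP : Pfun p ⟶ constK p where
  app V := ModuleCat.ofHom (Finsupp.linearCombination (Kk p) (fun _ : (V : Type) => (1 : Kk p)))
  naturality := by
    intro V W f
    ext : 1
    apply Finsupp.lhom_ext
    intro a b
    simp [Pfun, constK]
    erw [LinearMap.comp_apply, Finsupp.lmapDomain_apply, Finsupp.mapDomain_single,
      Finsupp.linearCombination_single, Finsupp.linearCombination_single]


/-- The reduced functor `P̄ ∈ 𝓕`, the kernel of the augmentation `P ⟶ k`. -/
def Pbar : FF p := kernel (augP p)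

/-- The functor `I_W ∈ 𝓕`, `V ↦ (functions Hom(V,W) → k)`. -/
def Ifun (W : FGModuleCat.{0} (Kk p)) : FF p where
  obj V := ModuleCat.of (Kk p) ((V →ₗ[Kk p] W) → Kk p)
  map {V V'} f := ModuleCat.ofHom (LinearMap.funLeft (Kk p) (Kk p)
    (fun ℓ : (V' : Type _) →ₗ[Kk p] W => ℓ ∘ₗ (f.hom.hom : V →ₗ[Kk p] V')))
  map_id V := by ext φ; rfl
  map_comp f g := by ext φ; rfl

/-- The functor `I = I_k ∈ 𝓕`. -/
def Icfun : FF p := Ifun p (FGModuleCat.of (Kk p) (Kk p))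

/-- Evaluation at the zero homomorphism, `I ⟶ k`. -/
def evalZero : Icfun p ⟶ constK p where
  app V := ModuleCat.ofHom (LinearMap.proj (0 : V →ₗ[Kk p] Kk p))
  naturality := by
    intro V W f
    ext φ
    have : (0 : (W : Type) →ₗ[Kk p] Kk p) ∘ₗ (f.hom.hom : V →ₗ[Kk p] W) = 0 := by
      ext x; rfl
    exact congrArg φ this

/-- The reduced functor `Ī ∈ 𝓕` of functions vanishing at `0`. -/
def Ibar : FF p := kernel (evalZero p)


/-- The largest subspace of `F(V)` belonging to a subfunctor of `F` that is
polynomial of degree at most `n`; objectwise, this is the value `(p_n F)(V)`. -/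
def pSub (n : ℕ) (F : FF p) (V : FGModuleCat.{0} (Kk p)) :
    Submodule (Kk p) (F.obj V) :=
  ⨆ (A : FF p) (j : A ⟶ F) (_ : Mono j) (_ : IsPolyLE p n A),
    LinearMap.range (j.app V).hom


/-- Iterated objectwise tensor powers `A^{⊗n}` of an object of `𝓕`. -/
def objPow (p : ℕ) [Fact p.Prime] (A : FF p) : ℕ → FF p
  | 0 => 𝟙_ (FF p)
  | 1 => A
  | n + 2 => objPow p A (n + 1) ⊗ A

/-!
The functor `Δ^{n+1}` is a right adjoint, so it preserves zero morphisms, and it preserves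
epimorphisms because `Δ` is the cokernel of a transformation between epi-preserving functors.
By a triangle identity `Δ^{n+1} ε_F` is split epi; it kills `Δ^{n+1}` of the cokernel
projection `π` of `ε_F`, so `Δ^{n+1} π` is an epimorphism that vanishes, i.e.
`Δ^{n+1} (coker ε_F) = 0`. Conversely, if `Δ^{n+1} G = 0` then naturality of the counit gives
`ε_F ≫ g = (Δ^{n+1} g ⊗ P̄^{⊗(n+1)}) ≫ ε_G = 0`, so every `g : F ⟶ G` factors uniquely through
`π`; these universal arrows assemble into a left adjoint of the inclusion.
-/

namespace CategoryTheory

open Limits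

variable {C D : Type*} [Category C] [Category D]

instance Functor.preservesEpimorphisms_cokernel [HasZeroMorphisms D] [HasPushouts D]
    {F G : C ⥤ D} (α : F ⟶ G) [HasCokernel α] [G.PreservesEpimorphisms] :
    (cokernel α).PreservesEpimorphisms where
  preserves {X _} f _ := by
    have : Epi ((cokernel.π α).app X ≫ (cokernel α).map f) := by
      rw [← (cokernel.π α).naturality f]
      infer_instance
    exact epi_of_epi ((cokernel.π α).app X) _

theorem Limits.cokernel.existsUnique_desc [HasZeroMorphisms C] {X Y Z : C} (f : X ⟶ Y)
    [HasCokernel f] (g : Y ⟶ Z) (w : f ≫ g = 0) : ∃! u, cokernel.π f ≫ u = g :=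
  ⟨cokernel.desc f g w, cokernel.π_desc f g w, fun _ hu =>
    (cancel_epi (cokernel.π f)).1 (hu.trans (cokernel.π_desc f g w).symm)⟩

section

variable [HasZeroMorphisms C] [HasZeroMorphisms D] {L : D ⥤ C} {R : C ⥤ D}

theorem Adjunction.counit_app_comp_eq_zero (adj : L ⊣ R) {F G : C} (hG : IsZero (R.obj G))
    (g : F ⟶ G) : adj.counit.app F ≫ g = 0 := by
  have := adj.isLeftAdjoint
  rw [← adj.counit_naturality g, hG.eq_of_tgt (R.map g) 0, L.map_zero, zero_comp]

theorem Adjunction.isZero_obj_cokernel_counit_app (adj : L ⊣ R) [HasCokernels C]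
    [R.PreservesEpimorphisms] (F : C) : IsZero (R.obj (cokernel (adj.counit.app F))) := by
  have := adj.isRightAdjoint
  have : IsSplitEpi (R.map (adj.counit.app F)) :=
    IsSplitEpi.mk' ⟨adj.unit.app _, adj.right_triangle_components F⟩
  refine IsZero.of_epi_eq_zero (R.map (cokernel.π _)) ?_
  rw [← cancel_epi (R.map (adj.counit.app F)), ← R.map_comp, cokernel.condition, R.map_zero,
    comp_zero]

end

theorem ObjectProperty.isRightAdjoint_ι_of_cokernel [HasZeroMorphisms C] [HasCokernels C]
    (P : ObjectProperty C) {K : C → C} (f : ∀ X, K X ⟶ X) (hP : ∀ X, P (cokernel (f X)))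
    (hf : ∀ X Y, P Y → ∀ g : X ⟶ Y, f X ≫ g = 0) : P.ι.IsRightAdjoint :=
  let e (X : C) (Y : P.FullSubcategory) :
      ((⟨cokernel (f X), hP X⟩ : P.FullSubcategory) ⟶ Y) ≃ (X ⟶ P.ι.obj Y) :=
    Equiv.ofBijective (fun u => cokernel.π (f X) ≫ u.hom)
      ⟨fun _ _ h => ObjectProperty.hom_ext _ ((cancel_epi _).1 h),
        fun g => ⟨ObjectProperty.homMk (cokernel.desc _ g (hf X Y.obj Y.property g)),
          cokernel.π_desc _ _ _⟩⟩
  (Adjunction.adjunctionOfEquivLeft e fun _ _ _ _ _ => (Category.assoc _ _ _).symm).isRightAdjoint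

end CategoryTheory

instance : (preAdd p).PreservesEpimorphisms := by
  unfold preAdd
  infer_instance

instance : (Delta p).PreservesEpimorphisms := by
  unfold Delta
  infer_instance

instance (m : ℕ) : (deltaIter p m).PreservesEpimorphisms := by
  induction m with
  | zero => exact inferInstanceAs (𝟭 (FF p)).PreservesEpimorphisms
  | succ k _ => exact inferInstanceAs (deltaIter p k ⋙ Delta p).PreservesEpimorphisms

/-- For every `F ∈ 𝓕` and `n ≥ 0`, and any adjunction between
`− ⊗ P̄^{⊗(n+1)}` and `Δ^{n+1}`, the quotient `coker(ε_F : Δ^{n+1}F ⊗ P̄^{⊗(n+1)} → F)`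
(with `ε` the counit of the adjunction) is polynomial of degree at most `n`, and every
morphism from `F` to a functor polynomial of degree at most `n` factors uniquely through
it; consequently the inclusion of the full subcategory of polynomial functors of degree
at most `n` admits a left adjoint. -/
theorem stmt_7 (p : ℕ) [Fact p.Prime] (n : ℕ) (F : FF p)
    (adj : tensorRight (objPow p (Pbar p) (n + 1)) ⊣ deltaIter p (n + 1)) :
    IsPolyLE p n (cokernel (adj.counit.app F)) ∧
    (∀ (G : FF p), IsPolyLE p n G → ∀ g : F ⟶ G,
      ∃! u : cokernel (adj.counit.app F) ⟶ G,
        cokernel.π (adj.counit.app F) ≫ u = g) ∧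
    (ObjectProperty.ι (IsPolyLE p n)).IsRightAdjoint := by
  have cokernel_isPolyLE (X : FF p) : IsPolyLE p n (cokernel (adj.counit.app X)) :=
    adj.isZero_obj_cokernel_counit_app X
  have counit_comp_eq_zero (X G : FF p) (hG : IsPolyLE p n G) (g : X ⟶ G) :
      adj.counit.app X ≫ g = 0 :=
    adj.counit_app_comp_eq_zero hG g
  exact ⟨cokernel_isPolyLE F,
    fun G hG g => cokernel.existsUnique_desc _ g (counit_comp_eq_zero F G hG g),
    ObjectProperty.isRightAdjoint_ι_of_cokernel _ _ cokernel_isPolyLE counit_comp_eq_zero⟩
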